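/- Let α = Ω·α̃ be a multiple of Ω and β < Ω. Suppose α+β ∈ ε̂_{Ω+1}, α+β is a limit ordinal, and α+β ∉ FIX(X). If (β_n)_{n<ω} is a strictly increasing sequence with supremum β, then (Θ_X(α+β_n))_{n<ω} is strictly increasing with supremum Θ_X(α+β). -/

import Mathlib

open Ordinal Set

noncomputable section
open scoped Classical

/-- `Ω`, the first uncountable ordinal. -/
def OmegaO : Ordinal := (Cardinal.aleph 1).ord

/-- `ε_{Ω+1}`, the least `ε > Ω` with `ω ^ ε = ε`. -/
def epsOmega : Ordinal := nfp (fun a => Ordinal.omega0 ^ a) (OmegaO + 1)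

lemma omega0_le_OmegaO : Ordinal.omega0 ≤ OmegaO := by
  rw [OmegaO, ← Cardinal.ord_aleph0]
  exact Cardinal.ord_le_ord.2 (Cardinal.aleph0_le_aleph 1)

lemma one_lt_OmegaO : 1 < OmegaO :=
  lt_of_lt_of_le Ordinal.one_lt_omega0 omega0_le_OmegaO

lemma OmegaO_pos : 0 < OmegaO := lt_trans zero_lt_one one_lt_OmegaO

/-- `ξ*`, the maximal coefficient in the `Ω`-normal form of `ξ`. -/
def star (ξ : Ordinal) : Ordinal :=
  if h0 : ξ = 0 then 0
  else if hl : log OmegaO ξ < ξ then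
    max (max (star (log OmegaO ξ)) (star (ξ % OmegaO ^ log OmegaO ξ)))
      (ξ / OmegaO ^ log OmegaO ξ)
  else 0
termination_by ξ
decreasing_by
  · exact hl
  · exact mod_opow_log_lt_self _ h0

/-- The generalized fundamental sequence `ξ[θ]`. -/
def fs (ξ θ : Ordinal) : Ordinal :=
  if h0 : ξ ≤ 1 then 0
  else if hmod : ξ % OmegaO ^ log OmegaO ξ ≠ 0 then
    OmegaO ^ log OmegaO ξ * (ξ / OmegaO ^ log OmegaO ξ) + fs (ξ % OmegaO ^ log OmegaO ξ) θ
  else if Order.IsSuccLimit (ξ / OmegaO ^ log OmegaO ξ) then OmegaO ^ log OmegaO ξ * θ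
  else if hβ : ξ / OmegaO ^ log OmegaO ξ = 1 then
    (if hlog : Order.IsSuccLimit (log OmegaO ξ) then
       (if hll : log OmegaO ξ < ξ then OmegaO ^ fs (log OmegaO ξ) θ else 0)
     else OmegaO ^ Ordinal.pred (log OmegaO ξ) * θ)
  else
    OmegaO ^ log OmegaO ξ * Ordinal.pred (ξ / OmegaO ^ log OmegaO ξ) + fs (OmegaO ^ log OmegaO ξ) θ
termination_by ξ
decreasing_by
  · exact mod_opow_log_lt_self _ (by intro h; exact h0 (by simp [h]))
  · exact hll
  · -- `Ω ^ log Ω ξ < ξ`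
    have hξ0 : ξ ≠ 0 := by intro h; exact h0 (by simp [h])
    have hle : OmegaO ^ log OmegaO ξ ≤ ξ := opow_log_le_self _ hξ0
    have hpos : 0 < OmegaO ^ log OmegaO ξ :=
      opow_pos _ OmegaO_pos
    have hβ0 : 0 < ξ / OmegaO ^ log OmegaO ξ :=
      Ordinal.div_pos (by positivity) |>.2 hle
    have hβ1 : 1 < ξ / OmegaO ^ log OmegaO ξ :=
      lt_of_le_of_ne (Ordinal.one_le_iff_ne_zero.2 hβ0.ne') (Ne.symm hβ)
    calc OmegaO ^ log OmegaO ξ = OmegaO ^ log OmegaO ξ * 1 := (mul_one _).symm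
      _ < OmegaO ^ log OmegaO ξ * (ξ / OmegaO ^ log OmegaO ξ) := by
          exact mul_lt_mul_of_pos_left hβ1 hpos
      _ ≤ ξ := Ordinal.mul_div_le _ _

/-- The terminal part `τ(ξ)`. -/
def tau (ξ : Ordinal) : Ordinal :=
  if h0 : ξ = 0 then 0
  else if hmod : ξ % OmegaO ^ log OmegaO ξ ≠ 0 then tau (ξ % OmegaO ^ log OmegaO ξ)
  else if Order.IsSuccLimit (ξ / OmegaO ^ log OmegaO ξ) then ξ / OmegaO ^ log OmegaO ξ
  else if log OmegaO ξ = 0 then 1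
  else if hlog : Order.IsSuccLimit (log OmegaO ξ) then
    (if hll : log OmegaO ξ < ξ then tau (log OmegaO ξ) else 0)
  else OmegaO
termination_by ξ
decreasing_by
  · exact mod_opow_log_lt_self _ h0
  · exact hll

/-- The collapsing function `Θ_X`. -/
def ThetaF (X : Set Ordinal) (ξ : Ordinal) : Ordinal :=
  sInf {θ | θ ∈ X ∧ star ξ < θ ∧ ∀ ζ, ζ < ξ → star ζ < θ → ThetaF X ζ < θ}
termination_by ξ
decreasing_by exact by assumption

/-- `Ω_n`: the tower `Ω_0 = 1`, `Ω_{n+1} = Ω ^ Ω_n`. -/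
def OmegaTow : ℕ → Ordinal
  | 0 => 1
  | n + 1 => OmegaO ^ OmegaTow n

/-- `Θ_X(ε_{Ω+1}) = sup_n Θ_X(Ω_n)`. -/
def ThetaEps (X : Set Ordinal) : Ordinal := ⨆ n : ℕ, ThetaF X (OmegaTow n)

/-- `ε̂_{Ω+1}`. -/
def hatEps (X : Set Ordinal) : Set Ordinal :=
  {ξ | ξ < epsOmega ∧ star ξ < ThetaEps X}

/-- `X` is a club in `Ω`. -/
def IsClubBelowOmega (X : Set Ordinal) : Prop :=
  (∀ x ∈ X, x < OmegaO) ∧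
  (∀ a, a < OmegaO → ∃ x ∈ X, a < x) ∧
  (∀ S : Set Ordinal, S ⊆ X → S.Nonempty → sSup S < OmegaO → sSup S ∈ X)

/-- The set of limit points of `X` (below `Ω`). -/
def limitPtsOf (X : Set Ordinal) : Set Ordinal :=
  {x | 0 < x ∧ ∀ y, y < x → ∃ z ∈ X, y < z ∧ z < x}

/-- `FIX(X)`. -/
def FIXs (X : Set Ordinal) : Set Ordinal :=
  {ξ | ξ < epsOmega ∧ star (fs ξ 1) < star ξ ∧ star ξ = tau ξ ∧
    ∃ γ, ξ < γ ∧ γ < epsOmega ∧ star ξ = ThetaF X γ}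

/-- `JUMP(X)`. -/
def JUMPs (X : Set Ordinal) : Set Ordinal :=
  {0} ∪ {ξ | ∃ ζ, ξ = ζ + 1} ∪ FIXs X

/-- `Θ*`. -/
def ThetaStarF (X : Set Ordinal) (ξ : Ordinal) : Ordinal :=
  if ∃ ζ, ξ = ζ + 1 then ThetaF X (Ordinal.pred ξ)
  else if ξ ∈ FIXs X then tau ξ
  else 0

/-- `ξ̌`. -/
def checkF (X : Set Ordinal) (ξ : Ordinal) : Ordinal :=
  if 0 < ThetaStarF X ξ then OmegaO * (ξ / OmegaO) else ξ

/-- `ℙ`, the club of countable additively indecomposable ordinals. -/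
def PP : Set Ordinal := {x | x < OmegaO ∧ ∃ a, x = Ordinal.omega0 ^ a}

/-- `1 + Ord`, the club of nonzero countable ordinals. -/
def oneOrdS : Set Ordinal := {x | 0 < x ∧ x < OmegaO}

/-- `Θ^{(i)}(ξ)`. -/
def ThetaIter (X : Set Ordinal) (ξ : Ordinal) : ℕ → Ordinal
  | 0 => ThetaStarF X ξ
  | n + 1 => ThetaF X (fs (checkF X ξ) (ThetaIter X ξ n))

/-- A Buchholz system of fundamental sequences for `Θ_X`. -/
def IsBuchholz (X : Set Ordinal) (B : Ordinal → ℕ → Ordinal) : Prop :=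
  (∀ n, B 0 n = 0) ∧
  (∀ α ξ n, ξ ∈ hatEps X → OmegaO ≤ ξ → tau ξ < OmegaO → ξ = fs α (tau ξ) →
    B ξ n = fs α (B (tau ξ) n)) ∧
  (∀ ξ n, ξ ∈ hatEps X → 0 < tau (checkF X ξ) → tau (checkF X ξ) < OmegaO →
    B (ThetaF X ξ) n = ThetaF X (B (checkF X ξ) n + ThetaStarF X ξ)) ∧
  (∀ ξ n, ξ ∈ hatEps X → tau (checkF X ξ) = OmegaO →
    B (ThetaF X ξ) n = ThetaIter X ξ n)

/-- The additional clause for the `σ = Θ_{1+Ord}` Buchholz system. -/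
def SigmaExtra (B : Ordinal → ℕ → Ordinal) : Prop :=
  ∀ β n, β < OmegaO → B (ThetaF oneOrdS β) n = β

/-- The additional clauses for the `ϑ = Θ_ℙ` Buchholz system. -/
def VarthetaExtra (B : Ordinal → ℕ → Ordinal) : Prop :=
  (∀ α β n, 0 < β → (∀ α' < α, α' + β < α + β) → B (α + β) n = α + B β n) ∧
  (∀ β n, β < OmegaO → β ∈ JUMPs PP → B (ThetaF PP β) n = ThetaStarF PP β * n)


/-!
Write `λ = sup_n Θ_X(α + β_n)`. The coefficients `(α + β_n)* = max(α*, β_n)` increase with `n`,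
so the defining property of `Θ_X` makes `Θ_X(α + β_n)` strictly increasing. The supremum `λ` lies
in the club `X`, exceeds `α*` and every `β_n`, and, as every `ζ < α + β` lies below some
`α + β_n`, satisfies `Θ_X(ζ) < λ` whenever `ζ* < λ`. If `(α + β)* < λ`, then `λ` is a candidate
for `Θ_X(α + β)`, which lies above every `Θ_X(α + β_n)` and is therefore `λ`. Otherwise
`λ = β = (α + β)*`; the least `γ` with `γ* < β ≤ Θ_X(γ)` then satisfies `Θ_X(γ) = β` and
`γ > α + β`, and with `(α + β)[1] = α + 1` and `τ(α + β) = β` this puts `α + β` in `FIX(X)`.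

The candidate sets are nonempty below `Ω`: the ordinals below `ε_{Ω+1}` with coefficients
`≤ θ < Ω` form a countable set, so `Θ_X` is bounded on it below `Ω`, and a closure point in `X`
of these bounds is a candidate.
-/

lemma OmegaO_ne_zero : OmegaO ≠ 0 := OmegaO_pos.ne'

lemma OmegaO_eq_omega_one : OmegaO = ω_ 1 := by
  unfold OmegaO; rw [Cardinal.ord_aleph]

lemma isPrincipal_add_OmegaO_opow (a : Ordinal) : IsPrincipal (· + ·) (OmegaO ^ a) := by
  have hΩ : IsPrincipal (· + ·) OmegaO := isPrincipal_add_ord (Cardinal.aleph0_le_aleph 1)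
  obtain ⟨e, he⟩ := (isPrincipal_add_iff_zero_or_omega0_opow.1 hΩ).resolve_left OmegaO_ne_zero
  rw [← he, ← opow_mul]
  exact isPrincipal_add_omega0_opow _

lemma sSup_lt_OmegaO {s : Set Ordinal} (hs : s.Countable) (h : ∀ x ∈ s, x < OmegaO) :
    sSup s < OmegaO := by
  have : Countable s := hs.to_subtype
  rw [sSup_eq_iSup', OmegaO_eq_omega_one]
  exact iSup_lt_omega_one fun i => OmegaO_eq_omega_one ▸ h i i.2

lemma iSup_lt_OmegaO {f : ℕ → Ordinal} (hf : ∀ n, f n < OmegaO) : ⨆ n, f n < OmegaO := by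
  rw [OmegaO_eq_omega_one] at hf ⊢
  exact iSup_lt_omega_one hf

lemma countable_Iic_of_lt_OmegaO {θ : Ordinal} (hθ : θ < OmegaO) : (Iic θ).Countable := by
  rw [← Iio_insert, countable_insert, ← Cardinal.le_aleph0_iff_set_countable,
    Cardinal.mk_Iio_ordinal, Cardinal.lift_le_aleph0, ← Cardinal.lt_aleph_one_iff]
  exact Cardinal.lt_ord.1 hθ

lemma omega0_opow_epsOmega : ω ^ epsOmega = epsOmega :=
  nfp_fp (isNormal_opow one_lt_omega0) _

lemma OmegaO_lt_epsOmega : OmegaO < epsOmega :=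
  (lt_add_one OmegaO).trans_le (le_nfp _ _)

lemma OmegaO_lt_OmegaO_opow_OmegaO : OmegaO < OmegaO ^ OmegaO := by
  simpa using (opow_lt_opow_iff_right one_lt_OmegaO).2 one_lt_OmegaO

lemma lt_OmegaO_opow_self {ζ : Ordinal} (h0 : ζ ≠ 0) (h : ζ < epsOmega) : ζ < OmegaO ^ ζ := by
  refine (right_le_opow ζ one_lt_OmegaO).lt_of_ne fun heq => h.not_ge ?_
  have hΩ : OmegaO < ζ := by
    refine lt_of_le_of_ne ?_ fun hζ => OmegaO_lt_OmegaO_opow_OmegaO.ne (hζ ▸ heq)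
    calc OmegaO = OmegaO ^ (1 : Ordinal) := (opow_one _).symm
      _ ≤ OmegaO ^ ζ := opow_le_opow_right OmegaO_pos (Order.one_le_iff_ne_zero.2 h0)
      _ = ζ := heq.symm
  have hω : ω ^ ζ ≤ ζ := (opow_le_opow_left ζ omega0_le_OmegaO).trans heq.symm.le
  exact nfp_le_fp (isNormal_opow one_lt_omega0).monotone (Order.add_one_le_of_lt hΩ) hω

lemma log_OmegaO_lt {ζ : Ordinal} (h0 : ζ ≠ 0) (h : ζ < epsOmega) : log OmegaO ζ < ζ := by
  refine (log_le_self _ _).lt_of_ne fun heq => (lt_OmegaO_opow_self h0 h).not_ge ?_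
  simpa only [heq] using opow_log_le_self OmegaO h0

lemma OmegaO_opow_lt_epsOmega {b : Ordinal} (hb : b < epsOmega) : OmegaO ^ b < epsOmega := by
  have hmul : IsPrincipal (· * ·) epsOmega := by
    rw [← omega0_opow_epsOmega, ← omega0_opow_epsOmega]
    exact isPrincipal_mul_omega0_opow_opow _
  calc OmegaO ^ b ≤ (ω ^ OmegaO) ^ b := opow_le_opow_left b (right_le_opow _ one_lt_omega0)
    _ = ω ^ (OmegaO * b) := (opow_mul _ _ _).symm
    _ < ω ^ epsOmega :=
      (opow_lt_opow_iff_right one_lt_omega0).2 (hmul OmegaO_lt_epsOmega hb)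
    _ = epsOmega := omega0_opow_epsOmega

lemma isSuccLimit_iSup_of_strictMono {f : ℕ → Ordinal} (hf : StrictMono f) :
    Order.IsSuccLimit (⨆ n, f n) := by
  by_contra h
  obtain ⟨i, hi⟩ := exists_eq_ciSup_of_not_isSuccLimit Ordinal.bddAbove_of_small h
  exact (hi ▸ hf i.lt_succ_self).not_ge (Ordinal.le_iSup f _)

section OpowLog

variable {b o x : Ordinal}

private lemma add_eq_opow_log_mul_add (x : Ordinal) :
    o + x = b ^ log b o * (o / b ^ log b o) + (o % b ^ log b o + x) := by
  rw [← add_assoc, div_add_mod]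

lemma log_add_of_mod_add_lt (hb : 1 < b) (ho : o ≠ 0) (hx : o % b ^ log b o + x < b ^ log b o) :
    log b (o + x) = log b o := by
  have hq : o / b ^ log b o ≠ 0 :=
    (div_pos (opow_ne_zero _ (zero_lt_one.trans hb).ne')).2 (opow_log_le_self b ho) |>.ne'
  rw [add_eq_opow_log_mul_add x, log_opow_mul_add hb hq hx,
    log_eq_zero (div_opow_log_lt o hb), add_zero]

lemma add_div_opow_log_of_mod_add_lt (hb : 1 < b) (hx : o % b ^ log b o + x < b ^ log b o) :
    (o + x) / b ^ log b o = o / b ^ log b o := by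
  rw [add_eq_opow_log_mul_add x, mul_add_div _ (opow_ne_zero _ (zero_lt_one.trans hb).ne'),
    div_eq_zero_of_lt hx, add_zero]

lemma add_mod_opow_log_of_mod_add_lt (hx : o % b ^ log b o + x < b ^ log b o) :
    (o + x) % b ^ log b o = o % b ^ log b o + x := by
  rw [add_eq_opow_log_mul_add x, mul_add_mod_self, mod_eq_of_lt hx]

end OpowLog

section OmegaNormalForm

variable {t x : Ordinal}

lemma one_le_log_OmegaO_mul (ht : t ≠ 0) : 1 ≤ log OmegaO (OmegaO * t) := by
  rw [← opow_le_iff_le_log one_lt_OmegaO (mul_ne_zero OmegaO_ne_zero ht), opow_one]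
  exact Ordinal.le_mul_left _ (pos_iff_ne_zero.2 ht)

lemma OmegaO_mul_mod_add_lt (ht : t ≠ 0) (hx : x < OmegaO) :
    OmegaO * t % OmegaO ^ log OmegaO (OmegaO * t) + x < OmegaO ^ log OmegaO (OmegaO * t) := by
  refine isPrincipal_add_OmegaO_opow _ (mod_lt _ (opow_ne_zero _ OmegaO_ne_zero)) (hx.trans_le ?_)
  simpa using opow_le_opow_right OmegaO_pos (one_le_log_OmegaO_mul ht)

/-- Both `Ω * t` and `Ω ^ log Ω (Ω * t)` are multiples of `Ω`, hence so is the remainder. -/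
lemma exists_OmegaO_mul_mod_eq (ht : t ≠ 0) :
    ∃ t' < t, OmegaO * t % OmegaO ^ log OmegaO (OmegaO * t) = OmegaO * t' := by
  have hne : OmegaO * t ≠ 0 := mul_ne_zero OmegaO_ne_zero ht
  have hΩ : OmegaO ∣ OmegaO ^ log OmegaO (OmegaO * t) := by
    simpa using opow_dvd_opow OmegaO (one_le_log_OmegaO_mul ht)
  obtain ⟨t', ht'⟩ := (dvd_add_iff (hΩ.mul_right _)).1
    ((div_add_mod (OmegaO * t) _).symm ▸ dvd_mul_right _ _)
  refine ⟨t', (mul_lt_mul_iff_right₀ OmegaO_pos).1 ?_, ht'⟩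
  rw [← ht']
  exact (mod_lt _ (opow_ne_zero _ OmegaO_ne_zero)).trans_le (opow_log_le_self _ hne)

lemma star_eq_max {ζ : Ordinal} (h0 : ζ ≠ 0) (hl : log OmegaO ζ < ζ) :
    star ζ = max (max (star (log OmegaO ζ)) (star (ζ % OmegaO ^ log OmegaO ζ)))
      (ζ / OmegaO ^ log OmegaO ζ) := by
  rw [star.eq_def, dif_neg h0, dif_pos hl]

lemma star_of_lt_OmegaO (hx : x < OmegaO) : star x = x := by
  have hzero : star (0 : Ordinal) = 0 := by rw [star.eq_def, dif_pos rfl]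
  rcases eq_or_ne x 0 with rfl | h0
  · exact hzero
  have hlog : log OmegaO x = 0 := log_eq_zero hx
  rw [star_eq_max h0 (hlog ▸ pos_iff_ne_zero.2 h0), hlog]
  simp [hzero]

lemma star_OmegaO_mul_add (t : Ordinal) (hx : x < OmegaO) (hε : OmegaO * t + x < epsOmega) :
    star (OmegaO * t + x) = max (star (OmegaO * t)) x := by
  induction t using WellFoundedLT.induction with
  | _ t IH =>
    rcases eq_or_ne t 0 with rfl | ht
    · simp [star_of_lt_OmegaO OmegaO_pos, star_of_lt_OmegaO hx]
    have hne : OmegaO * t ≠ 0 := mul_ne_zero OmegaO_ne_zero ht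
    have hξne : OmegaO * t + x ≠ 0 := by simp [hne]
    obtain ⟨t', ht', hmod⟩ := exists_OmegaO_mul_mod_eq ht
    have hx' := OmegaO_mul_mod_add_lt ht hx
    have hε' : OmegaO * t' + x < epsOmega := lt_of_le_of_lt (by gcongr) hε
    rw [star_eq_max hξne (log_OmegaO_lt hξne hε), log_add_of_mod_add_lt one_lt_OmegaO hne hx',
      add_div_opow_log_of_mod_add_lt one_lt_OmegaO hx', add_mod_opow_log_of_mod_add_lt hx', hmod,
      IH t' ht' hε', star_eq_max hne (log_OmegaO_lt hne (le_self_add.trans_lt hε)), hmod]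
    ac_rfl

lemma tau_OmegaO_mul_add (t : Ordinal) (hx0 : x ≠ 0) (hx : x < OmegaO) :
    tau (OmegaO * t + x) = tau x := by
  induction t using WellFoundedLT.induction with
  | _ t IH =>
    rcases eq_or_ne t 0 with rfl | ht
    · rw [mul_zero, zero_add]
    have hne : OmegaO * t ≠ 0 := mul_ne_zero OmegaO_ne_zero ht
    obtain ⟨t', ht', hmod⟩ := exists_OmegaO_mul_mod_eq ht
    have hx' := OmegaO_mul_mod_add_lt ht hx
    rw [tau.eq_def, dif_neg (by simp [hx0]), log_add_of_mod_add_lt one_lt_OmegaO hne hx',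
      add_mod_opow_log_of_mod_add_lt hx', hmod, dif_pos (by simp [hx0]), IH t' ht']

lemma fs_OmegaO_mul_add (t : Ordinal) {θ : Ordinal} (hx0 : x ≠ 0) (hx : x < OmegaO) :
    fs (OmegaO * t + x) θ = OmegaO * t + fs x θ := by
  induction t using WellFoundedLT.induction with
  | _ t IH =>
    rcases eq_or_ne t 0 with rfl | ht
    · rw [mul_zero, zero_add, zero_add]
    have hne : OmegaO * t ≠ 0 := mul_ne_zero OmegaO_ne_zero ht
    obtain ⟨t', ht', hmod⟩ := exists_OmegaO_mul_mod_eq ht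
    have hx' := OmegaO_mul_mod_add_lt ht hx
    have hgt : 1 < OmegaO * t + x :=
      one_lt_OmegaO.trans_le ((Ordinal.le_mul_left _ (pos_iff_ne_zero.2 ht)).trans le_self_add)
    rw [fs.eq_def, dif_neg hgt.not_ge, log_add_of_mod_add_lt one_lt_OmegaO hne hx',
      add_div_opow_log_of_mod_add_lt one_lt_OmegaO hx', add_mod_opow_log_of_mod_add_lt hx', hmod,
      dif_pos (by simp [hx0]), IH t' ht', ← add_assoc, ← hmod, div_add_mod]

lemma tau_of_isSuccLimit {β : Ordinal} (hβ : Order.IsSuccLimit β) (hβΩ : β < OmegaO) :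
    tau β = β := by
  rw [tau.eq_def, dif_neg hβ.pos.ne', log_eq_zero hβΩ]
  simp [hβ]

lemma fs_of_isSuccLimit {β : Ordinal} (θ : Ordinal) (hβ : Order.IsSuccLimit β)
    (hβΩ : β < OmegaO) : fs β θ = θ := by
  rw [fs.eq_def, dif_neg (one_lt_of_isSuccLimit hβ).not_ge, log_eq_zero hβΩ]
  simp [hβ]

end OmegaNormalForm

lemma OmegaTow_lt_epsOmega : ∀ n, OmegaTow n < epsOmega
  | 0 => one_lt_OmegaO.trans OmegaO_lt_epsOmega
  | n + 1 => OmegaO_opow_lt_epsOmega (OmegaTow_lt_epsOmega n)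

lemma star_OmegaTow : ∀ n, star (OmegaTow n) = 1
  | 0 => star_of_lt_OmegaO one_lt_OmegaO
  | n + 1 => by
    have hne : OmegaO ^ OmegaTow n ≠ 0 := opow_ne_zero _ OmegaO_ne_zero
    have hlog : log OmegaO (OmegaO ^ OmegaTow n) = OmegaTow n := log_opow one_lt_OmegaO _
    have hpos : OmegaTow n ≠ 0 := by cases n <;> simp [OmegaTow, OmegaO_ne_zero]
    have hlt : log OmegaO (OmegaO ^ OmegaTow n) < OmegaO ^ OmegaTow n := by
      rw [hlog]; exact lt_OmegaO_opow_self hpos (OmegaTow_lt_epsOmega n)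
    rw [OmegaTow, star_eq_max hne hlt, hlog, mod_self, div_self hne,
      star_of_lt_OmegaO OmegaO_pos, star_OmegaTow n]
    simp

def normalFormClosure (θ : Ordinal) : ℕ → Set Ordinal
  | 0 => Iic θ
  | n + 1 => normalFormClosure θ n ∪
      (fun p : Ordinal × Ordinal × Ordinal => OmegaO ^ p.1 * p.2.1 + p.2.2) ''
        (normalFormClosure θ n ×ˢ Iic θ ×ˢ normalFormClosure θ n)

lemma monotone_normalFormClosure (θ : Ordinal) : Monotone (normalFormClosure θ) :=
  monotone_nat_of_le_succ fun _ => subset_union_left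

lemma countable_normalFormClosure {θ : Ordinal} (hθ : θ < OmegaO) :
    ∀ n, (normalFormClosure θ n).Countable
  | 0 => countable_Iic_of_lt_OmegaO hθ
  | n + 1 => (countable_normalFormClosure hθ n).union <|
      ((countable_normalFormClosure hθ n).prod ((countable_Iic_of_lt_OmegaO hθ).prod
        (countable_normalFormClosure hθ n))).image _

lemma mem_iUnion_normalFormClosure {θ ζ : Ordinal} (hζ : ζ < epsOmega) (hs : star ζ ≤ θ) :
    ζ ∈ ⋃ n, normalFormClosure θ n := by
  induction ζ using WellFoundedLT.induction with
  | _ ζ IH =>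
    rcases lt_or_ge ζ OmegaO with hζΩ | hΩζ
    · exact mem_iUnion.2 ⟨0, (star_of_lt_OmegaO hζΩ).symm.trans_le hs⟩
    have h0 : ζ ≠ 0 := (OmegaO_pos.trans_le hΩζ).ne'
    have hlog := log_OmegaO_lt h0 hζ
    have hmod : ζ % OmegaO ^ log OmegaO ζ < ζ := mod_opow_log_lt_self _ h0
    rw [star_eq_max h0 hlog, max_le_iff, max_le_iff] at hs
    obtain ⟨n₁, hn₁⟩ := mem_iUnion.1 (IH _ hlog (hlog.trans hζ) hs.1.1)
    obtain ⟨n₂, hn₂⟩ := mem_iUnion.1 (IH _ hmod (hmod.trans hζ) hs.1.2)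
    refine mem_iUnion.2 ⟨max n₁ n₂ + 1, Or.inr ⟨(_, _, _), ⟨?_, hs.2, ?_⟩, div_add_mod ζ _⟩⟩
    · exact monotone_normalFormClosure θ (le_max_left n₁ n₂) hn₁
    · exact monotone_normalFormClosure θ (le_max_right n₁ n₂) hn₂

lemma countable_setOf_star_le {θ : Ordinal} (hθ : θ < OmegaO) :
    {ζ | ζ < epsOmega ∧ star ζ ≤ θ}.Countable :=
  (countable_iUnion (countable_normalFormClosure hθ)).mono fun _ hζ =>
    mem_iUnion_normalFormClosure hζ.1 hζ.2

lemma IsClubBelowOmega.exists_mem_forall_lt {X : Set Ordinal} (hX : IsClubBelowOmega X)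
    {F : Ordinal → Ordinal} (hF : Monotone F) (hFΩ : ∀ θ < OmegaO, F θ < OmegaO) {a : Ordinal}
    (ha : a < OmegaO) : ∃ l ∈ X, a < l ∧ ∀ θ < l, F θ < l := by
  obtain ⟨hXΩ, hXub, hXsup⟩ := hX
  have hnext : ∀ b, ∃ x ∈ X, b < OmegaO → b < x := fun b => by
    by_cases hb : b < OmegaO
    · obtain ⟨x, hxX, hbx⟩ := hXub b hb
      exact ⟨x, hxX, fun _ => hbx⟩
    · obtain ⟨x, hxX, -⟩ := hXub 0 OmegaO_pos
      exact ⟨x, hxX, fun h => absurd h hb⟩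
  choose next hnextX hnext using hnext
  let f : ℕ → Ordinal := fun k => Nat.rec (next a) (fun _ p => next (F p)) k
  have hfX : ∀ k, f k ∈ X := fun k => by cases k <;> exact hnextX _
  have hstep : ∀ k, F (f k) < f (k + 1) := fun k => hnext _ (hFΩ _ (hXΩ _ (hfX k)))
  refine ⟨⨆ k, f k, hXsup _ (range_subset_iff.2 hfX) (range_nonempty f)
    (iSup_lt_OmegaO fun k => hXΩ _ (hfX k)), (hnext a ha).trans_le (Ordinal.le_iSup f 0), ?_⟩
  intro θ hθ
  obtain ⟨k, hk⟩ := Ordinal.lt_iSup_iff.1 hθ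
  exact ((hF hk.le).trans_lt (hstep k)).trans_le (Ordinal.le_iSup f (k + 1))

section Collapse

variable {X : Set Ordinal} {ξ ζ : Ordinal}

def thetaCandidates (X : Set Ordinal) (ξ : Ordinal) : Set Ordinal :=
  {θ | θ ∈ X ∧ star ξ < θ ∧ ∀ ζ, ζ < ξ → star ζ < θ → ThetaF X ζ < θ}

lemma ThetaF_eq_sInf (X : Set Ordinal) (ξ : Ordinal) : ThetaF X ξ = sInf (thetaCandidates X ξ) := by
  rw [ThetaF.eq_def]; rfl

lemma ThetaF_mem_thetaCandidates (hne : (thetaCandidates X ξ).Nonempty) :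
    ThetaF X ξ ∈ thetaCandidates X ξ :=
  ThetaF_eq_sInf X ξ ▸ csInf_mem hne

lemma ThetaF_le_of_mem {θ : Ordinal} (hθ : θ ∈ thetaCandidates X ξ) : ThetaF X ξ ≤ θ :=
  ThetaF_eq_sInf X ξ ▸ csInf_le' hθ

lemma star_lt_ThetaF (hne : (thetaCandidates X ξ).Nonempty) : star ξ < ThetaF X ξ :=
  (ThetaF_mem_thetaCandidates hne).2.1

lemma ThetaF_lt_ThetaF (hne : (thetaCandidates X ξ).Nonempty) (hζ : ζ < ξ)
    (hs : star ζ ≤ star ξ) : ThetaF X ζ < ThetaF X ξ :=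
  (ThetaF_mem_thetaCandidates hne).2.2 ζ hζ (hs.trans_lt (star_lt_ThetaF hne))

/-- `Θ_X` takes the junk value `sInf ∅ = 0` where there is no candidate. -/
lemma ThetaF_lt_OmegaO (hX : IsClubBelowOmega X) (ξ : Ordinal) : ThetaF X ξ < OmegaO := by
  rcases (thetaCandidates X ξ).eq_empty_or_nonempty with he | hne
  · rw [ThetaF_eq_sInf, he, Ordinal.sInf_empty]
    exact OmegaO_pos
  · exact hX.1 _ (ThetaF_mem_thetaCandidates hne).1

lemma ThetaEps_lt_OmegaO (hX : IsClubBelowOmega X) : ThetaEps X < OmegaO :=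
  iSup_lt_OmegaO fun _ => ThetaF_lt_OmegaO hX _

def thetaSup (X : Set Ordinal) (θ : Ordinal) : Ordinal :=
  sSup (ThetaF X '' {ζ | ζ < epsOmega ∧ star ζ ≤ θ})

lemma bddAbove_image_ThetaF (hX : IsClubBelowOmega X) (s : Set Ordinal) :
    BddAbove (ThetaF X '' s) :=
  ⟨OmegaO, forall_mem_image.2 fun ζ _ => (ThetaF_lt_OmegaO hX ζ).le⟩

lemma ThetaF_le_thetaSup (hX : IsClubBelowOmega X) (hζ : ζ < epsOmega) :
    ThetaF X ζ ≤ thetaSup X (star ζ) :=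
  le_csSup (bddAbove_image_ThetaF hX _) ⟨ζ, ⟨hζ, le_rfl⟩, rfl⟩

lemma monotone_thetaSup (hX : IsClubBelowOmega X) : Monotone (thetaSup X) := fun _ _ h =>
  have h0 : (0 : Ordinal) < epsOmega ∧ star (0 : Ordinal) ≤ _ :=
    ⟨OmegaO_pos.trans OmegaO_lt_epsOmega, (star_of_lt_OmegaO OmegaO_pos).trans_le bot_le⟩
  csSup_le_csSup (bddAbove_image_ThetaF hX _) (Nonempty.image _ ⟨0, h0⟩)
    (image_mono fun _ hζ => ⟨hζ.1, hζ.2.trans h⟩)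

lemma thetaSup_lt_OmegaO (hX : IsClubBelowOmega X) {θ : Ordinal} (hθ : θ < OmegaO) :
    thetaSup X θ < OmegaO :=
  sSup_lt_OmegaO ((countable_setOf_star_le hθ).image _)
    (forall_mem_image.2 fun ζ _ => ThetaF_lt_OmegaO hX ζ)

lemma thetaCandidates_nonempty (hX : IsClubBelowOmega X) (hξ : ξ < epsOmega)
    (hs : star ξ < OmegaO) : (thetaCandidates X ξ).Nonempty := by
  obtain ⟨l, hlX, hsl, hl⟩ :=
    hX.exists_mem_forall_lt (monotone_thetaSup hX) (fun _ => thetaSup_lt_OmegaO hX) hs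
  exact ⟨l, hlX, hsl, fun ζ hζ hζs => (ThetaF_le_thetaSup hX (hζ.trans hξ)).trans_lt (hl _ hζs)⟩

end Collapse

lemma exists_ThetaF_eq {X : Set Ordinal} {θ : Ordinal} (hθX : θ ∈ X) (h1 : 1 < θ)
    (hθ : θ < ThetaEps X) : ∃ γ < epsOmega, star γ < θ ∧ ThetaF X γ = θ := by
  obtain ⟨n, hn⟩ := Ordinal.lt_iSup_iff.1 hθ
  set S := {ζ | star ζ < θ ∧ θ ≤ ThetaF X ζ}
  have hS : OmegaTow n ∈ S := ⟨(star_OmegaTow n).trans_lt h1, hn.le⟩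
  have hγS : sInf S ∈ S := csInf_mem ⟨_, hS⟩
  refine ⟨sInf S, (csInf_le' hS).trans_lt (OmegaTow_lt_epsOmega n), hγS.1,
    le_antisymm (ThetaF_le_of_mem ⟨hθX, hγS.1, fun ζ hζ hζs => ?_⟩) hγS.2⟩
  exact not_le.1 fun h => notMem_of_lt_csInf' hζ ⟨hζs, h⟩

lemma mem_FIXs_of_le_star {X : Set Ordinal} {t β l : Ordinal}
    (hβ : Order.IsSuccLimit β) (hβΩ : β < OmegaO) (hmem : OmegaO * t + β ∈ hatEps X)
    (hlX : l ∈ X) (hsl : star (OmegaO * t) < l) (hβl : β ≤ l) (hle : l ≤ star (OmegaO * t + β))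
    (hcl : ∀ ζ < OmegaO * t + β, star ζ < l → ThetaF X ζ < l) : OmegaO * t + β ∈ FIXs X := by
  rw [star_OmegaO_mul_add t hβΩ hmem.1] at hle
  obtain rfl : β = l := hβl.antisymm ((le_max_iff.1 hle).resolve_left hsl.not_ge)
  have hstar : star (OmegaO * t + β) = β := by
    rw [star_OmegaO_mul_add t hβΩ hmem.1, max_eq_right hsl.le]
  have h1 : 1 < β := one_lt_of_isSuccLimit hβ
  refine ⟨hmem.1, ?_, ?_, ?_⟩
  · have hε : OmegaO * t + 1 < epsOmega := (add_lt_add_right h1 _).trans hmem.1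
    rw [fs_OmegaO_mul_add t hβ.pos.ne' hβΩ, fs_of_isSuccLimit 1 hβ hβΩ,
      star_OmegaO_mul_add t one_lt_OmegaO hε, hstar]
    exact max_lt hsl h1
  · rw [hstar, tau_OmegaO_mul_add t hβ.pos.ne' hβΩ, tau_of_isSuccLimit hβ hβΩ]
  · obtain ⟨γ, hγε, hγs, hγ⟩ := exists_ThetaF_eq hlX h1 (hstar ▸ hmem.2)
    refine ⟨γ, lt_of_not_ge fun hle => ?_, hγε, hstar.trans hγ.symm⟩
    rcases hle.lt_or_eq with hlt | rfl
    · exact (hcl γ hlt hγs).ne hγ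
    · exact hγs.ne hstar

section Sequence

variable {X : Set Ordinal} {ξs : ℕ → Ordinal} {ξ : Ordinal}

lemma strictMono_ThetaF_comp (hξs : StrictMono ξs) (hs : Monotone (star ∘ ξs))
    (hne : ∀ n, (thetaCandidates X (ξs n)).Nonempty) : StrictMono (ThetaF X ∘ ξs) :=
  strictMono_nat_of_lt_succ fun n =>
    ThetaF_lt_ThetaF (hne (n + 1)) (hξs n.lt_succ_self) (hs n.le_succ)

lemma iSup_ThetaF_mem (hX : IsClubBelowOmega X) (hne : ∀ n, (thetaCandidates X (ξs n)).Nonempty) :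
    ⨆ n, ThetaF X (ξs n) ∈ X :=
  hX.2.2 _ (range_subset_iff.2 fun n => (ThetaF_mem_thetaCandidates (hne n)).1) (range_nonempty _)
    (iSup_lt_OmegaO fun _ => ThetaF_lt_OmegaO hX _)

lemma star_lt_iSup_ThetaF (hne : ∀ n, (thetaCandidates X (ξs n)).Nonempty) (n : ℕ) :
    star (ξs n) < ⨆ k, ThetaF X (ξs k) :=
  (star_lt_ThetaF (hne n)).trans_le (Ordinal.le_iSup (fun k => ThetaF X (ξs k)) n)

lemma ThetaF_lt_iSup_ThetaF (hξs : StrictMono ξs) (hs : Monotone (star ∘ ξs))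
    (hne : ∀ n, (thetaCandidates X (ξs n)).Nonempty) (hcof : ∀ ζ < ξ, ∃ n, ζ < ξs n)
    {ζ : Ordinal} (hζ : ζ < ξ) (hζs : star ζ < ⨆ n, ThetaF X (ξs n)) :
    ThetaF X ζ < ⨆ n, ThetaF X (ξs n) := by
  obtain ⟨k₁, hk₁⟩ := Ordinal.lt_iSup_iff.1 hζs
  obtain ⟨k₂, hk₂⟩ := hcof ζ hζ
  have hmono := (strictMono_ThetaF_comp hξs hs hne).monotone
  refine ((ThetaF_mem_thetaCandidates (hne (max k₁ k₂))).2.2 ζ ?_ ?_).trans_le (Ordinal.le_iSup _ _)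
  · exact hk₂.trans_le (hξs.monotone (le_max_right k₁ k₂))
  · exact hk₁.trans_le (hmono (le_max_left k₁ k₂))

lemma ThetaF_eq_iSup_ThetaF (hX : IsClubBelowOmega X) (hξs : StrictMono ξs)
    (hs : Monotone (star ∘ ξs)) (hne : ∀ n, (thetaCandidates X (ξs n)).Nonempty)
    (hcof : ∀ ζ < ξ, ∃ n, ζ < ξs n) (hlt : ∀ n, ξs n < ξ) (hsle : ∀ n, star (ξs n) ≤ star ξ)
    (hξ : star ξ < ⨆ n, ThetaF X (ξs n)) : ThetaF X ξ = ⨆ n, ThetaF X (ξs n) := by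
  have hmem : ⨆ n, ThetaF X (ξs n) ∈ thetaCandidates X ξ :=
    ⟨iSup_ThetaF_mem hX hne, hξ, fun _ hζ => ThetaF_lt_iSup_ThetaF hξs hs hne hcof hζ⟩
  exact le_antisymm (ThetaF_le_of_mem hmem)
    (Ordinal.iSup_le fun n => (ThetaF_lt_ThetaF ⟨_, hmem⟩ (hlt n) (hsle n)).le)

end Sequence

theorem stmt8_general (X : Set Ordinal) (hX : IsClubBelowOmega X)
    (αt α β : Ordinal) (hα : α = OmegaO * αt) (hβ : β < OmegaO)
    (hmem : α + β ∈ hatEps X) (hfix : α + β ∉ FIXs X)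
    (βs : ℕ → Ordinal) (hmono : StrictMono βs) (hsup : (⨆ n, βs n) = β) :
    StrictMono (fun n => ThetaF X (α + βs n)) ∧
    (⨆ n, ThetaF X (α + βs n)) = ThetaF X (α + β) := by
  subst hα hsup
  have hβs : ∀ n, βs n < ⨆ n, βs n := fun n =>
    (hmono n.lt_succ_self).trans_le (Ordinal.le_iSup βs _)
  have hξs : StrictMono (fun n => OmegaO * αt + βs n) := fun m n h => add_lt_add_right (hmono h) _
  have hlt : ∀ n, OmegaO * αt + βs n < OmegaO * αt + ⨆ n, βs n := fun n =>
    add_lt_add_right (hβs n) _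
  have hstar : ∀ n, star (OmegaO * αt + βs n) = max (star (OmegaO * αt)) (βs n) := fun n =>
    star_OmegaO_mul_add αt ((hβs n).trans hβ) ((hlt n).trans hmem.1)
  have hs : Monotone fun n => star (OmegaO * αt + βs n) := fun m n h => by
    simp only [hstar]; exact max_le_max le_rfl (hmono.monotone h)
  have hsle : ∀ n, star (OmegaO * αt + βs n) ≤ star (OmegaO * αt + ⨆ n, βs n) := fun n => by
    rw [hstar, star_OmegaO_mul_add αt hβ hmem.1]; exact max_le_max le_rfl (hβs n).le
  have hne : ∀ n, (thetaCandidates X (OmegaO * αt + βs n)).Nonempty := fun n =>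
    thetaCandidates_nonempty hX ((hlt n).trans hmem.1)
      (((hsle n).trans_lt hmem.2).trans (ThetaEps_lt_OmegaO hX))
  have hcof : ∀ ζ < OmegaO * αt + ⨆ n, βs n, ∃ n, ζ < OmegaO * αt + βs n := fun _ hζ =>
    Ordinal.lt_iSup_iff.1 (add_iSup _ βs ▸ hζ)
  have hsl := star_lt_iSup_ThetaF hne
  refine ⟨strictMono_ThetaF_comp hξs hs hne,
    (ThetaF_eq_iSup_ThetaF hX hξs hs hne hcof hlt hsle (lt_of_not_ge fun hle => hfix ?_)).symm⟩
  refine mem_FIXs_of_le_star (isSuccLimit_iSup_of_strictMono hmono) hβ hmem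
    (iSup_ThetaF_mem hX hne) ((hstar 0).symm ▸ le_max_left _ _ |>.trans_lt (hsl 0))
    (Ordinal.iSup_le fun n => ((hstar n).symm ▸ le_max_right _ _ |>.trans_lt (hsl n)).le) hle
    fun _ hζ => ThetaF_lt_iSup_ThetaF hξs hs hne hcof hζ

/-- `Θ_X(α+β_n) ↗ Θ_X(α+β)` whenever `β_n ↗ β` and `α+β ∈ ε̂_{Ω+1} ∩ Lim \\ FIX(X)`. -/
theorem stmt8 (X : Set Ordinal) (hX : IsClubBelowOmega X) (h0X : 0 ∉ X)
    (αt α β : Ordinal) (hα : α = OmegaO * αt) (hβ : β < OmegaO)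
    (hmem : α + β ∈ hatEps X) (hlim : Order.IsSuccLimit (α + β)) (hfix : α + β ∉ FIXs X)
    (βs : ℕ → Ordinal) (hmono : StrictMono βs) (hsup : (⨆ n, βs n) = β) :
    StrictMono (fun n => ThetaF X (α + βs n)) ∧
    (⨆ n, ThetaF X (α + βs n)) = ThetaF X (α + β) :=
  stmt8_general X hX αt α β hα hβ hmem hfix βs hmono hsup

end
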